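/- Let E ∈ ℝ² with E ≠ 0, let R, X ∈ ℝ with R ≠ 0, and let Imax > 0. Define Q(x) := (3/2)X‖x‖² + (3/2)⟨JE,x⟩ and V(x) := (R² + X²)‖x‖² + 2⟨ZᵀE, x⟩ + ‖E‖² for x ∈ ℝ². Then the image set { (Q(x), V(x)) : x ∈ ℝ², ‖x‖ ≤ Imax } is a convex subset of ℝ². -/

import Mathlib

/-!
With `c = R² + X² > 0`, the combination `c • Q - (3/2) X • V` is affine in `x`, so the region is an
affine image of the image of the disc under `x ↦ (⟪m, x⟫, c ‖x‖² + ⟪b, x⟫)` for suitable `m`, `b`.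
For the latter, take a convex combination `p` of two points of the disc: the linear coordinate
already has the right value at `p`, and by convexity the quadratic one is at most the target.
Moving from `p` along a direction `u ⊥ m` with `⟪b, u⟫ ≥ 0` until the boundary circle keeps the
linear coordinate and raises the quadratic one above the target, because `c ‖·‖²` is maximal on
the boundary. The intermediate value theorem on the convex slice `{‖z‖ ≤ r, ⟪m, z⟫ = ⟪m, p⟫}`
then produces the required point.
-/

open scoped RealInnerProductSpace

/-- The matrix `J` with rows `(0,1)` and `(-1,0)`. -/
def Jmat : Matrix (Fin 2) (Fin 2) ℝ := !![0, 1; -1, 0]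

/-- The impedance matrix `Z` with rows `(R,-X)` and `(X,R)`. -/
def Zmat (R X : ℝ) : Matrix (Fin 2) (Fin 2) ℝ := !![R, -X; X, R]

/-- Interpret a plain vector `Fin 2 → ℝ` as an element of Euclidean space `ℝ²`. -/
noncomputable def toE (v : Fin 2 → ℝ) : EuclideanSpace ℝ (Fin 2) := WithLp.toLp 2 v

/-- The vector `J E ∈ ℝ²`. -/
noncomputable def Jv (E : EuclideanSpace ℝ (Fin 2)) : EuclideanSpace ℝ (Fin 2) :=
  toE (Jmat.mulVec (fun i => E i))

/-- The vector `Zᵀ E ∈ ℝ²`. -/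
noncomputable def ZtE (R X : ℝ) (E : EuclideanSpace ℝ (Fin 2)) : EuclideanSpace ℝ (Fin 2) :=
  toE ((Zmat R X).transpose.mulVec (fun i => E i))

open Metric Module

theorem exists_nonneg_norm_add_smul_eq {E : Type*} [NormedAddCommGroup E] [NormedSpace ℝ E]
    {x u : E} {r : ℝ} (hx : ‖x‖ ≤ r) (hu : u ≠ 0) : ∃ t : ℝ, 0 ≤ t ∧ ‖x + t • u‖ = r := by
  set T := (r + ‖x‖) / ‖u‖
  have hT : 0 ≤ T := div_nonneg (by linarith [norm_nonneg x]) (norm_nonneg u)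
  have hTu : ‖T • u‖ = r + ‖x‖ := by
    rw [norm_smul, Real.norm_of_nonneg hT, div_mul_cancel₀ _ (norm_ne_zero_iff.2 hu)]
  have hrT : r ≤ ‖x + T • u‖ := by
    have := norm_sub_le (x + T • u) x
    rw [add_sub_cancel_left, hTu] at this
    linarith
  obtain ⟨t, ht, htr⟩ := intermediate_value_Icc hT
    (by fun_prop : Continuous fun t : ℝ => ‖x + t • u‖).continuousOn ⟨by simpa using hx, hrT⟩
  exact ⟨t, ht.1, htr⟩

section

variable {F : Type*} [NormedAddCommGroup F] [InnerProductSpace ℝ F]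

theorem exists_ne_zero_inner_eq_zero_inner_nonneg [FiniteDimensional ℝ F]
    (hF : 2 ≤ finrank ℝ F) (m b : F) : ∃ u ≠ 0, ⟪m, u⟫ = 0 ∧ 0 ≤ ⟪b, u⟫ := by
  have hne : (ℝ ∙ m)ᗮ ≠ ⊥ := by
    intro hbot
    have hsum := (ℝ ∙ m).finrank_add_finrank_orthogonal
    have hm : finrank ℝ (ℝ ∙ m) ≤ 1 := by simpa using finrank_span_le_card (R := ℝ) {m}
    rw [hbot, finrank_bot] at hsum
    omega
  obtain ⟨u, hu, hu0⟩ := Submodule.exists_mem_ne_zero_of_ne_bot hne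
  have hmu := Submodule.mem_orthogonal_singleton_iff_inner_right.mp hu
  rcases le_total 0 ⟪b, u⟫ with hb | hb
  · exact ⟨u, hu0, hmu, hb⟩
  · exact ⟨-u, neg_ne_zero.2 hu0, by simp [hmu], by simpa using hb⟩

theorem convexOn_smul_norm_sq_add_inner {c : ℝ} (hc : 0 ≤ c) (b : F) :
    ConvexOn ℝ Set.univ fun x : F => c * ‖x‖ ^ 2 + ⟪b, x⟫ :=
  (((convexOn_norm convex_univ).pow (fun _ _ => norm_nonneg _) 2).smul hc).add
    ((innerₗ F b).convexOn convex_univ)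

theorem convex_image_closedBall_inner_quadratic [FiniteDimensional ℝ F] (hF : 2 ≤ finrank ℝ F)
    (m b : F) {c : ℝ} (hc : 0 ≤ c) (r : ℝ) :
    Convex ℝ ((fun x : F => (⟪m, x⟫, c * ‖x‖ ^ 2 + ⟪b, x⟫)) '' closedBall 0 r) := by
  rintro _ ⟨x, hx, rfl⟩ _ ⟨y, hy, rfl⟩ α β hα hβ hαβ
  set w : F → ℝ := fun x => c * ‖x‖ ^ 2 + ⟪b, x⟫
  set p := α • x + β • y
  have hp : p ∈ closedBall 0 r := convex_closedBall 0 r hx hy hα hβ hαβ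
  have hmp : ⟪m, p⟫ = α * ⟪m, x⟫ + β * ⟪m, y⟫ := by
    simp only [p, inner_add_right, real_inner_smul_right]
  have hwp : w p ≤ α * w x + β * w y :=
    (convexOn_smul_norm_sq_add_inner hc b).2 trivial trivial hα hβ hαβ
  obtain ⟨u, hu0, hmu, hbu⟩ := exists_ne_zero_inner_eq_zero_inner_nonneg hF m b
  obtain ⟨t, ht, hq⟩ := exists_nonneg_norm_add_smul_eq (mem_closedBall_zero_iff.1 hp) hu0
  set q := p + t • u
  have hmq : ⟪m, q⟫ = ⟪m, p⟫ := by simp [q, inner_add_right, real_inner_smul_right, hmu]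
  have hwq : α * w x + β * w y ≤ w q := by
    have hx2 : c * ‖x‖ ^ 2 ≤ c * r ^ 2 := mul_le_mul_of_nonneg_left
      (pow_le_pow_left₀ (norm_nonneg x) (mem_closedBall_zero_iff.1 hx) 2) hc
    have hy2 : c * ‖y‖ ^ 2 ≤ c * r ^ 2 := mul_le_mul_of_nonneg_left
      (pow_le_pow_left₀ (norm_nonneg y) (mem_closedBall_zero_iff.1 hy) 2) hc
    have hbq : ⟪b, q⟫ = α * ⟪b, x⟫ + β * ⟪b, y⟫ + t * ⟪b, u⟫ := by
      simp only [q, p, inner_add_right, real_inner_smul_right]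
    have hr2 : c * r ^ 2 = α * (c * r ^ 2) + β * (c * r ^ 2) := by
      rw [← add_mul, hαβ, one_mul]
    simp only [w, hq, hbq]
    linarith [mul_le_mul_of_nonneg_left hx2 hα, mul_le_mul_of_nonneg_left hy2 hβ,
      mul_nonneg ht hbu]
  have hK : IsPreconnected (closedBall 0 r ∩ {z | ⟪m, z⟫ = ⟪m, p⟫}) :=
    ((convex_closedBall 0 r).inter (convex_hyperplane (innerₗ F m).isLinear _)).isPreconnected
  obtain ⟨z, ⟨hzr, hzm⟩, hzw⟩ := hK.intermediate_value ⟨hp, rfl⟩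
    ⟨mem_closedBall_zero_iff.2 hq.le, hmq⟩ (by fun_prop : Continuous w).continuousOn ⟨hwp, hwq⟩
  exact ⟨z, hzr, Prod.ext (hzm.trans hmp) hzw⟩

theorem convex_image_closedBall_quadratic_pair [FiniteDimensional ℝ F] (hF : 2 ≤ finrank ℝ F)
    (α : ℝ) (a b : F) {c : ℝ} (hc : 0 < c) (e r : ℝ) :
    Convex ℝ ((fun x : F => (α * ‖x‖ ^ 2 + ⟪a, x⟫, c * ‖x‖ ^ 2 + ⟪b, x⟫ + e)) '' closedBall 0 r) := by
  have hL : IsLinearMap ℝ fun p : ℝ × ℝ => (c⁻¹ * (α * p.2 + p.1), p.2) :=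
    ⟨fun p q => by ext <;> simp only [Prod.fst_add, Prod.snd_add]; ring,
      fun s p => by ext <;> simp only [Prod.smul_fst, Prod.smul_snd, smul_eq_mul]; ring⟩
  have h := ((convex_image_closedBall_inner_quadratic hF (c • a - α • b) b hc.le r).is_linear_image
    hL).translate (0, e)
  simp only [Set.image_image] at h
  refine (Set.image_congr fun x _ => ?_) ▸ h
  ext
  · simp only [Prod.fst_add, zero_add, inner_sub_left, real_inner_smul_left]
    field_simp
    ring
  · simp only [Prod.snd_add]
    ring

end

theorem stmt4 (E : EuclideanSpace ℝ (Fin 2)) (R X : ℝ) (hR : R ≠ 0)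
    (Imax : ℝ) :
    Convex ℝ {p : ℝ × ℝ | ∃ x : EuclideanSpace ℝ (Fin 2), ‖x‖ ≤ Imax ∧
      p = ((3 / 2) * X * ‖x‖ ^ 2 + (3 / 2) * ⟪Jv E, x⟫,
           (R ^ 2 + X ^ 2) * ‖x‖ ^ 2 + 2 * ⟪ZtE R X E, x⟫ + ‖E‖ ^ 2)} := by
  have h := convex_image_closedBall_quadratic_pair (by simp) ((3 / 2) * X) ((3 / 2 : ℝ) • Jv E)
    ((2 : ℝ) • ZtE R X E) (by positivity : 0 < R ^ 2 + X ^ 2) (‖E‖ ^ 2) Imax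
  convert h using 1
  ext p
  simp [real_inner_smul_left, eq_comm]
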